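/- Let a be a letter such that every letter appearing in a word x is ≥ a. Then in the stylic monoid, axa = xa. -/

import Mathlib

noncomputable section

open FreeMonoid

/-- The defining relations of the stylic congruence: the Knuth (plactic)
relations together with the idempotent relations `a² ≡ a`. -/
inductive StylicRel (A : Type*) [LinearOrder A] : FreeMonoid A → FreeMonoid A → Prop
  | knuth1 {a b c : A} : a < b → b < c →
      StylicRel A (ofList [b, a, c]) (ofList [b, c, a])
  | knuth2 {a b c : A} : a < b → b < c →
      StylicRel A (ofList [a, c, b]) (ofList [c, a, b])
  | knuth3 {a b : A} : a < b →
      StylicRel A (ofList [b, a, b]) (ofList [b, b, a])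
  | knuth4 {a b : A} : a < b →
      StylicRel A (ofList [a, b, a]) (ofList [b, a, a])
  | idem (a : A) : StylicRel A (ofList [a, a]) (ofList [a])

/-- The stylic congruence on the free monoid `A*`. -/
def stylCon (A : Type*) [LinearOrder A] : Con (FreeMonoid A) := conGen (StylicRel A)

/-- The stylic monoid `Styl(A)`. -/
abbrev Styl (A : Type*) [LinearOrder A] := (stylCon A).Quotient

/-! For `b ≥ a`, the idempotent relation `a a = a` together with the Knuth relation
`a b a = b a a` give `a b a = b a` in `Styl A`. Because `a` is idempotent, this absorption
propagates along a word: `a (b w) a = a b (a w a) = (a b a) w a = b a w a = b (a w a) = b w a`. -/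

theorem List.mul_prod_mul_eq_prod_mul {M : Type*} [Monoid M] {e : M} (he : e * e = e)
    (l : List M) (hl : ∀ y ∈ l, e * y * e = y * e) : e * l.prod * e = l.prod * e := by
  induction l with
  | nil => simpa using he
  | cons y l ih =>
    have hp : e * l.prod * e = l.prod * e := ih fun z hz => hl z (List.mem_cons_of_mem _ hz)
    calc e * (y :: l).prod * e = e * y * (l.prod * e) := by
          rw [List.prod_cons]; simp only [mul_assoc]
      _ = e * y * (e * l.prod * e) := by rw [hp]
      _ = y * e * l.prod * e := by rw [← hl y List.mem_cons_self]; simp only [mul_assoc]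
      _ = y * (e * l.prod * e) := by simp only [mul_assoc]
      _ = (y :: l).prod * e := by rw [hp, List.prod_cons, mul_assoc]

namespace Styl

variable {A : Type*} [LinearOrder A]

def letter (a : A) : Styl A := (stylCon A).mk' (of a)

theorem mk'_ofList (l : List A) : (stylCon A).mk' (ofList l) = (l.map letter).prod := by
  induction l with
  | nil => rfl
  | cons b l ih => rw [ofList_cons, map_mul, ih, List.map_cons, List.prod_cons]; rfl

theorem mk'_eq_of_stylicRel {u v : FreeMonoid A} (h : StylicRel A u v) :
    (stylCon A).mk' u = (stylCon A).mk' v :=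
  (Con.eq _).mpr (ConGen.Rel.of _ _ h)

theorem letter_mul_self (a : A) : letter a * letter a = letter a := by
  have idem := mk'_eq_of_stylicRel (StylicRel.idem a)
  simpa only [mk'_ofList, List.map_cons, List.map_nil, List.prod_cons, List.prod_nil,
    mul_one] using idem

theorem letter_mul_letter_mul_self {a b : A} (hab : a ≤ b) :
    letter a * letter b * letter a = letter b * letter a := by
  rcases hab.eq_or_lt with rfl | hlt
  · rw [letter_mul_self, letter_mul_self]
  · have knuth := mk'_eq_of_stylicRel (StylicRel.knuth4 hlt)
    simp only [mk'_ofList, List.map_cons, List.map_nil, List.prod_cons, List.prod_nil,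
      mul_one] at knuth
    rw [mul_assoc, knuth, letter_mul_self]

end Styl

/-- Lemma `axa` (i): if every letter of `x` is `≥ a`,
then `a x a = x a` in the stylic monoid. -/
theorem styl_axa {A : Type*} [LinearOrder A] (a : A) (x : List A)
    (h : ∀ b ∈ x, a ≤ b) :
    (stylCon A).mk' (ofList ([a] ++ x ++ [a])) =
      (stylCon A).mk' (ofList (x ++ [a])) := by
  simp only [Styl.mk'_ofList, List.map_append, List.prod_append, List.map_cons, List.map_nil,
    List.prod_cons, List.prod_nil, mul_one]
  refine List.mul_prod_mul_eq_prod_mul (Styl.letter_mul_self a) _ ?_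
  simp only [List.mem_map]
  rintro _ ⟨b, hb, rfl⟩
  exact Styl.letter_mul_letter_mul_self (h b hb)
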